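/- For a reversible irreducible Markov chain with stationary distribution π on a finite state space, π(x)·E_π(τ_x) = ∑_{t=0}^∞ [p^t(x,x) − π(x)] for every state x, where τ_x is the hitting time of x and E_π denotes expectation when the initial state is distributed according to π. -/

import Mathlib

/-!
The first-step equations for `h = E_·(τ_x)` together with stationarity of `π` give
`P h = h - 1 + π(x)⁻¹ 𝟙_x`, hence `π(x) ((P^{t+1} h)(x) - (P^t h)(x)) = p^t(x,x) - π(x)`: the
series telescopes to `π(x) (lim_T (P^T h)(x) - h(x))`. Since some power of `P` has only positive
entries, Doeblin's contraction of the spread `max g - min g` makes `P^T g` converge geometrically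
fast to the constant `π ⬝ᵥ g`, which yields both the limit `π ⬝ᵥ h` and the absolute convergence
of the series.
-/

open Finset Filter Topology Matrix

section Spread

variable {n : Type*} [Fintype n] [Nonempty n]

noncomputable def spread (g : n → ℝ) : ℝ :=
  univ.sup' univ_nonempty g - univ.inf' univ_nonempty g

lemma abs_sub_dotProduct_le_spread {w : n → ℝ} (hw : ∀ i, 0 ≤ w i) (hw1 : ∑ i, w i = 1)
    (g : n → ℝ) (a : n) : |g a - w ⬝ᵥ g| ≤ spread g := by
  have hsub : ∀ i, |g a - g i| ≤ spread g := fun i =>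
    abs_sub_le_iff.2 ⟨by unfold spread; linarith [le_sup' g (mem_univ a), inf'_le g (mem_univ i)],
      by unfold spread; linarith [le_sup' g (mem_univ i), inf'_le g (mem_univ a)]⟩
  calc |g a - w ⬝ᵥ g| = |∑ i, w i * (g a - g i)| := by
        simp only [dotProduct, mul_sub, sum_sub_distrib, ← sum_mul, hw1, one_mul]
    _ ≤ ∑ i, w i * |g a - g i| := by
        refine (abs_sum_le_sum_abs _ _).trans_eq (sum_congr rfl fun i _ => ?_)
        rw [abs_mul, abs_of_nonneg (hw i)]
    _ ≤ ∑ i, w i * spread g := sum_le_sum fun i _ => mul_le_mul_of_nonneg_left (hsub i) (hw i)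
    _ = spread g := by rw [← sum_mul, hw1, one_mul]

variable [DecidableEq n]

/-- Doeblin's contraction: removing the uniform part `ε` of every row leaves rows of mass
`1 - card n * ε`, and the uniform part contributes the same amount to every entry of `Q *ᵥ g`. -/
lemma spread_mulVec_le {Q : Matrix n n ℝ} (hQ : Q ∈ rowStochastic ℝ n) {ε : ℝ}
    (hε : ∀ i j, ε ≤ Q i j) (g : n → ℝ) :
    spread (Q *ᵥ g) ≤ (1 - Fintype.card n * ε) * spread g := by
  set M := univ.sup' univ_nonempty g
  set m := univ.inf' univ_nonempty g
  have hsplit : ∀ a, (Q *ᵥ g) a = ε * ∑ z, g z + ∑ z, (Q a z - ε) * g z := fun a => by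
    simp only [mulVec, dotProduct, sub_mul, sum_sub_distrib, mul_sum]; ring
  have hmass : ∀ a, ∑ z, (Q a z - ε) = 1 - Fintype.card n * ε := fun a => by
    simp [sum_sub_distrib, sum_row_of_mem_rowStochastic hQ a]
  have hupper : ∀ a, (Q *ᵥ g) a ≤ ε * ∑ z, g z + (1 - Fintype.card n * ε) * M := fun a => by
    rw [hsplit, ← hmass a, sum_mul]
    gcongr with z
    exacts [sub_nonneg.2 (hε a z), le_sup' g (mem_univ z)]
  have hlower : ∀ a, ε * ∑ z, g z + (1 - Fintype.card n * ε) * m ≤ (Q *ᵥ g) a := fun a => by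
    rw [hsplit, ← hmass a, sum_mul]
    gcongr with z
    exacts [sub_nonneg.2 (hε a z), inf'_le g (mem_univ z)]
  have := sup'_le univ_nonempty _ fun a _ => hupper a
  have := le_inf' univ_nonempty _ fun a _ => hlower a
  unfold spread
  linarith

lemma card_mul_le_one_of_forall_le {Q : Matrix n n ℝ} (hQ : Q ∈ rowStochastic ℝ n) {ε : ℝ}
    (hε : ∀ i j, ε ≤ Q i j) : Fintype.card n * ε ≤ 1 := by
  obtain ⟨a⟩ := ‹Nonempty n›
  have := sum_le_sum fun j (_ : j ∈ univ) => hε a j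
  rwa [sum_row_of_mem_rowStochastic hQ a, sum_const, card_univ, nsmul_eq_mul] at this

lemma spread_mulVec_le_self {Q : Matrix n n ℝ} (hQ : Q ∈ rowStochastic ℝ n) (g : n → ℝ) :
    spread (Q *ᵥ g) ≤ spread g := by
  simpa using spread_mulVec_le hQ (fun _ _ => nonneg_of_mem_rowStochastic hQ) g

lemma spread_pow_mulVec_le {Q : Matrix n n ℝ} (hQ : Q ∈ rowStochastic ℝ n) {ε : ℝ}
    (hε : ∀ i j, ε ≤ Q i j) (g : n → ℝ) (k : ℕ) :
    spread (Q ^ k *ᵥ g) ≤ (1 - Fintype.card n * ε) ^ k * spread g := by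
  have hq : 0 ≤ 1 - Fintype.card n * ε := sub_nonneg.2 (card_mul_le_one_of_forall_le hQ hε)
  induction k with
  | zero => simp
  | succ k ih =>
    rw [pow_succ', ← mulVec_mulVec, pow_succ', mul_assoc]
    exact (spread_mulVec_le hQ hε _).trans (mul_le_mul_of_nonneg_left ih hq)

lemma spread_pow_mulVec_le_pow_div {P : Matrix n n ℝ} (hP : P ∈ rowStochastic ℝ n) {m : ℕ}
    (hm : 0 < m) {ε : ℝ} (hε : ∀ i j, ε ≤ (P ^ m) i j) (g : n → ℝ) (t : ℕ) :
    spread (P ^ t *ᵥ g) ≤ (1 - Fintype.card n * ε) ^ (t / m) * spread g := by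
  rw [← Nat.mod_add_div t m, pow_add, pow_mul, ← mulVec_mulVec, Nat.add_mul_div_left _ _ hm,
    Nat.div_eq_of_lt (Nat.mod_lt _ hm), zero_add]
  exact (spread_mulVec_le_self (pow_mem hP _) _).trans
    (spread_pow_mulVec_le (pow_mem hP m) hε g _)

end Spread

lemma summable_pow_div {q : ℝ} (hq0 : 0 ≤ q) (hq1 : q < 1) (m : ℕ) [NeZero m] :
    Summable fun t : ℕ => q ^ (t / m) := by
  rw [← (Nat.divModEquiv m).symm.summable_iff]
  have hdiv : ∀ p : ℕ × Fin m, (p.1 * m + p.2) / m = p.1 := fun p => by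
    rw [Nat.add_comm, Nat.add_mul_div_right _ _ (NeZero.pos m), Nat.div_eq_of_lt p.2.is_lt, zero_add]
  simpa [Function.comp_def, hdiv] using
    (summable_geometric_of_lt_one hq0 hq1).mul_of_nonneg
      (Summable.of_finite (f := fun _ : Fin m => (1 : ℝ))) (fun k => pow_nonneg hq0 k)
      (fun _ => zero_le_one)

section MarkovChain

variable {n : Type*} [Fintype n] {P : Matrix n n ℝ} {π : n → ℝ}

lemma vecMul_eq_self_of_reversible (hrow : ∀ i, ∑ j, P i j = 1)
    (hrev : ∀ i j, π i * P i j = π j * P j i) : π ᵥ* P = π := by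
  ext j
  simp only [vecMul, dotProduct, hrev _ j, ← mul_sum, hrow, mul_one]

variable [DecidableEq n]

lemma vecMul_pow_eq_self (hπP : π ᵥ* P = π) (t : ℕ) : π ᵥ* P ^ t = π := by
  induction t with
  | zero => simp
  | succ t ih => rw [pow_succ, ← vecMul_vecMul, ih, hπP]

lemma mul_apply_pos_of_mem_rowStochastic {M N : Matrix n n ℝ} (hM : M ∈ rowStochastic ℝ n)
    (hN : ∀ i j, 0 < N i j) (i j : n) : 0 < (M * N) i j := by
  obtain ⟨k, -, hk⟩ : ∃ k ∈ univ, 0 < M i k := by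
    by_contra! h
    have := sum_nonpos h
    rw [sum_row_of_mem_rowStochastic hM i] at this
    linarith
  exact sum_pos' (fun k _ => mul_nonneg (nonneg_of_mem_rowStochastic hM) (hN k j).le)
    ⟨k, mem_univ k, mul_pos hk (hN k j)⟩

lemma summable_mulVec_pow_sub_dotProduct (hP : P ∈ rowStochastic ℝ n) (hπ0 : ∀ i, 0 ≤ π i)
    (hπ1 : ∑ i, π i = 1) (hπP : π ᵥ* P = π) {t₀ : ℕ} (hpos : ∀ i j, 0 < (P ^ t₀) i j)
    (g : n → ℝ) (a : n) : Summable fun t => (P ^ t *ᵥ g) a - π ⬝ᵥ g := by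
  have : Nonempty n := ⟨a⟩
  -- `t₀ = 0` is possible when `n` is a singleton; a positive exponent is needed below.
  have hpos' : ∀ i j, 0 < (P ^ (t₀ + 1)) i j := by
    rw [pow_succ']; exact mul_apply_pos_of_mem_rowStochastic hP hpos
  set ε := univ.inf' univ_nonempty fun p : n × n => (P ^ (t₀ + 1)) p.1 p.2
  have hε : ∀ i j, ε ≤ (P ^ (t₀ + 1)) i j := fun i j => inf'_le _ (mem_univ (i, j))
  have hεpos : 0 < ε := (lt_inf'_iff _).2 fun p _ => hpos' p.1 p.2
  have hq0 : 0 ≤ 1 - Fintype.card n * ε :=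
    sub_nonneg.2 (card_mul_le_one_of_forall_le (pow_mem hP _) hε)
  have hq1 : 1 - Fintype.card n * ε < 1 := by
    have : (0 : ℝ) < Fintype.card n := by exact_mod_cast Fintype.card_pos
    nlinarith
  refine Summable.of_norm_bounded ((summable_pow_div hq0 hq1 (t₀ + 1)).mul_right (spread g))
    fun t => ?_
  rw [Real.norm_eq_abs, ← vecMul_pow_eq_self hπP t, ← dotProduct_mulVec]
  exact (abs_sub_dotProduct_le_spread hπ0 hπ1 _ a).trans
    (spread_pow_mulVec_le_pow_div hP t₀.succ_pos hε g t)

variable {x : n} {h : n → ℝ}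

/-- The first-step equations determine `P *ᵥ h` up to the value at `x`, and stationarity of `π`
fixes that value: the defect `P *ᵥ h - h + 1` vanishes off `x` and has `π`-mean `1`. -/
lemma mulVec_eq_of_hitting_equations (hπ1 : ∑ i, π i = 1) (hπP : π ᵥ* P = π) (hπx : π x ≠ 0)
    (hrec : ∀ y, y ≠ x → h y = 1 + ∑ z, P y z * h z) :
    P *ᵥ h = h - 1 + (π x)⁻¹ • Pi.single x 1 := by
  set d := P *ᵥ h - h + 1
  have hd : ∀ y, y ≠ x → d y = 0 := fun y hy => by
    simp only [d, Pi.add_apply, Pi.sub_apply, Pi.one_apply, mulVec, dotProduct, hrec y hy]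
    ring
  have hmean : π ⬝ᵥ d = 1 := by
    simp only [d, dotProduct_add, dotProduct_sub, dotProduct_mulVec, hπP, sub_self, zero_add]
    simpa [dotProduct] using hπ1
  have hdx : d = (π x)⁻¹ • Pi.single x 1 := by
    rw [dotProduct, sum_eq_single x (fun y _ hy => by rw [hd y hy, mul_zero]) (by simp)] at hmean
    ext y
    rcases eq_or_ne y x with rfl | hy
    · simp [eq_inv_of_mul_eq_one_right hmean]
    · simp [hd y hy, hy]
  rw [← hdx]
  simp [d]

lemma pow_apply_sub_eq_of_hitting_equations (hP : P ∈ rowStochastic ℝ n) (hπ1 : ∑ i, π i = 1)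
    (hπP : π ᵥ* P = π) (hπx : π x ≠ 0) (hrec : ∀ y, y ≠ x → h y = 1 + ∑ z, P y z * h z)
    (t : ℕ) : (P ^ t) x x - π x = π x * ((P ^ (t + 1) *ᵥ h) x - (P ^ t *ᵥ h) x) := by
  rw [pow_succ, ← mulVec_mulVec, mulVec_eq_of_hitting_equations hπ1 hπP hπx hrec, mulVec_add,
    mulVec_sub, mulVec_smul, one_vecMul_of_mem_rowStochastic (pow_mem hP t), mulVec_single_one]
  simp only [Pi.add_apply, Pi.sub_apply, Pi.smul_apply, Pi.one_apply, col_apply, smul_eq_mul]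
  field_simp
  ring

end MarkovChain

theorem stationary_hitting_time_series
    {V : Type*} [Fintype V] [DecidableEq V]
    (P : Matrix V V ℝ) (π : V → ℝ)
    (hnn : ∀ x y, 0 ≤ P x y) (hrow : ∀ x, ∑ y, P x y = 1)
    (hπpos : ∀ x, 0 < π x) (hπsum : ∑ x, π x = 1)
    (hrev : ∀ x y, π x * P x y = π y * P y x)
    (haper : ∃ t : ℕ, ∀ x y, 0 < (P ^ t) x y)
    (x : V) (h : V → ℝ)
    (hx : h x = 0)
    (hrec : ∀ y, y ≠ x → h y = 1 + ∑ z, P y z * h z) :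
    π x * (∑ y, π y * h y) = ∑' t : ℕ, ((P ^ t) x x - π x) := by
  obtain ⟨t₀, ht₀⟩ := haper
  have hP : P ∈ rowStochastic ℝ V := mem_rowStochastic_iff_sum.2 ⟨hnn, hrow⟩
  have hπP : π ᵥ* P = π := vecMul_eq_self_of_reversible hrow hrev
  have hsummable := summable_mulVec_pow_sub_dotProduct hP (fun y => (hπpos y).le) hπsum hπP ht₀
  have hstep := pow_apply_sub_eq_of_hitting_equations hP hπsum hπP (hπpos x).ne' hrec
  have hlim : Tendsto (fun t => (P ^ t *ᵥ h) x) atTop (𝓝 (π ⬝ᵥ h)) :=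
    tendsto_sub_nhds_zero_iff.1 (hsummable h x).tendsto_atTop_zero
  have hsum : HasSum (fun t => (P ^ t) x x - π x) (π x * (π ⬝ᵥ h - h x)) := by
    refine ((hsummable (Pi.single x 1) x).congr fun t => ?_).hasSum_iff_tendsto_nat.2 ?_
    · simp
    · simp only [hstep, ← mul_sum, sum_range_sub (fun t => (P ^ t *ᵥ h) x), pow_zero, one_mulVec]
      exact (hlim.sub_const (h x)).const_mul (π x)
  rw [hsum.tsum_eq, hx, sub_zero, dotProduct]
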